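/- Let K ⊆ ℕ be finite, let ρ ⊆ I × I be K-symmetric, and let ξ = (ν₀, μ₀) ∈ I. Then for every ν ∈ ℕ \ (K ∪ {ν₀}) and every μ ∈ Fin 2: (ξ, (ν, μ)) ∈ ρ holds if and only if (ξ, (ν', μ')) ∈ ρ holds for every ν' ∈ ℕ \ (K ∪ {ν₀}) and every μ' ∈ Fin 2. -/
import Mathlib


/-- Membership in the group `𝔊` of automorphisms underlying the permutation model `Σ₂`:
permutations of `I = ℕ × Fin 2` acting by a permutation of `ℕ` together with, for each
`n`, a permutation of the pair `{n} × Fin 2`. -/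
def InG (π : Equiv.Perm (ℕ × Fin 2)) : Prop :=
  ∃ (φ : Equiv.Perm ℕ) (πn : ℕ → Equiv.Perm (Fin 2)),
    ∀ (n : ℕ) (m : Fin 2), π (n, m) = (φ n, πn n m)

/-- `π` fixes every point of `K × Fin 2`. -/
def FixesK (π : Equiv.Perm (ℕ × Fin 2)) (K : Set ℕ) : Prop :=
  ∀ ξ : ℕ × Fin 2, ξ.1 ∈ K → π ξ = ξ

/-- `δ ⊆ I` is `K`-symmetric: `π '' δ = δ` for every `π ∈ 𝔊` fixing `K × Fin 2` pointwise. -/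
def SymmSet (K : Set ℕ) (δ : Set (ℕ × Fin 2)) : Prop :=
  ∀ π : Equiv.Perm (ℕ × Fin 2), InG π → FixesK π K → π '' δ = δ

/-- `ρ ⊆ I × I` is `K`-symmetric: for every `π ∈ 𝔊` fixing `K × Fin 2` pointwise,
`(π ξ, π η) ∈ ρ ↔ (ξ, η) ∈ ρ`. -/
def SymmRel (K : Set ℕ) (ρ : Set ((ℕ × Fin 2) × (ℕ × Fin 2))) : Prop :=
  ∀ π : Equiv.Perm (ℕ × Fin 2), InG π → FixesK π K →
    ∀ ξ η : ℕ × Fin 2, ((π ξ, π η) ∈ ρ ↔ (ξ, η) ∈ ρ)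

/-- Lemma 1 (paper): for a `K`-symmetric `ρ` and `ξ = (ν₀, μ₀)`, for all `ν ∉ K ∪ {ν₀}`
and `μ`, `(ξ, (ν, μ)) ∈ ρ` iff `(ξ, (ν', μ')) ∈ ρ` for all `ν' ∉ K ∪ {ν₀}` and all `μ'`. -/
theorem stmt_3 (K : Set ℕ) (hK : K.Finite) (ρ : Set ((ℕ × Fin 2) × (ℕ × Fin 2)))
    (hρ : SymmRel K ρ) (ν₀ : ℕ) (μ₀ : Fin 2) :
    ∀ (ν : ℕ) (μ : Fin 2), ν ∉ K ∪ {ν₀} →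
      ((((ν₀, μ₀) : ℕ × Fin 2), ((ν, μ) : ℕ × Fin 2)) ∈ ρ ↔
        ∀ (ν' : ℕ) (μ' : Fin 2), ν' ∉ K ∪ {ν₀} →
          (((ν₀, μ₀) : ℕ × Fin 2), ((ν', μ') : ℕ × Fin 2)) ∈ ρ) := by

  intro ν μ hν
  constructor
  · intro h ν' μ' hν'
    -- build the permutation swapping ν ↔ ν' and μ ↔ μ' in fiber ν
    by_cases hvv : ν' = ν
    · subst hvv
      by_cases hmm : μ' = μ
      · subst hmm; exact h
      · set πn : ℕ → Equiv.Perm (Fin 2) := fun n => if n = ν' then Equiv.swap μ μ' else 1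
        set π : Equiv.Perm (ℕ × Fin 2) := Equiv.prodShear (Equiv.refl ℕ) πn
        have hInG : InG π := ⟨Equiv.refl ℕ, πn, fun n m => rfl⟩
        have hfix : FixesK π K := by
          rintro ⟨n, m⟩ hn
          have : n ≠ ν' := by rintro rfl; exact hν' (Or.inl hn)
          simp [π, πn, this]
        have := (hρ π hInG hfix (ν₀, μ₀) (ν', μ)).mpr h
        have h0 : π (ν₀, μ₀) = (ν₀, μ₀) := by
          have : ν₀ ≠ ν' := by rintro rfl; exact hν' (Or.inr rfl)
          simp [π, πn, this]
        have h1 : π (ν', μ) = (ν', μ') := by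
          simp [π, πn, Equiv.swap_apply_left]
        rw [h0, h1] at this
        exact this
    · set πn : ℕ → Equiv.Perm (Fin 2) := fun n => if n = ν then Equiv.swap μ μ' else 1
      set π : Equiv.Perm (ℕ × Fin 2) := Equiv.prodShear (Equiv.swap ν ν') πn
      have hInG : InG π := ⟨Equiv.swap ν ν', πn, fun n m => rfl⟩
      have hfix : FixesK π K := by
        rintro ⟨n, m⟩ hn
        have h1 : n ≠ ν := by rintro rfl; exact hν (Or.inl hn)
        have h2 : n ≠ ν' := by rintro rfl; exact hν' (Or.inl hn)
        simp [π, πn, Equiv.swap_apply_of_ne_of_ne h1 h2, h1]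
      have := (hρ π hInG hfix (ν₀, μ₀) (ν, μ)).mpr h
      have h0 : π (ν₀, μ₀) = (ν₀, μ₀) := by
        have e1 : ν₀ ≠ ν := by rintro rfl; exact hν (Or.inr rfl)
        have e2 : ν₀ ≠ ν' := by rintro rfl; exact hν' (Or.inr rfl)
        simp [π, πn, Equiv.swap_apply_of_ne_of_ne e1 e2, e1]
      have h1 : π (ν, μ) = (ν', μ') := by
        simp [π, πn, Equiv.swap_apply_left]
      rw [h0, h1] at this
      exact this
  · intro h
    exact h ν μ hν
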